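/- arXiv:2410.02648 — 3 statements merged into one kernel-verified Lean document; each statement's English description precedes it below -/
import Mathlib

section
/- Let A be a free abelian group of finite rank. Then the commutator map induces a group isomorphism from the second cohomology group H²(A, ℂ^×) (with trivial action, using normalized 2-cocycles) onto the group Alt²(A) of alternating bilinear maps A × A → ℂ^×. That is: every alternating bicharacter c : A × A → ℂ^× arises as c(a,b) = f(a,b)f(b,a)^{-1} for some normalized 2-cocycle f, and two 2-cocycles have the same commutator map if and only if they differ by a coboundary. -/
/-- A normalized 2-cocycle on an abelian group `A` with coefficients in `ℂˣ`
(trivial action). -/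
def IsNormalizedCocycle {A : Type*} [AddCommGroup A] (f : A → A → ℂˣ) : Prop :=
  (∀ a, f 0 a = 1 ∧ f a 0 = 1) ∧
    ∀ a b c, f a b * f (a + b) c = f a (b + c) * f b c

/-- `f` is a coboundary: `f(a,b) = h(a+b)h(a)⁻¹h(b)⁻¹` for some `h` with `h(0)=1`. -/
def IsCoboundary {A : Type*} [AddCommGroup A] (f : A → A → ℂˣ) : Prop :=
  ∃ h : A → ℂˣ, h 0 = 1 ∧ ∀ a b, f a b = h (a + b) * (h a)⁻¹ * (h b)⁻¹

/-- An alternating bicharacter (alternating bilinear map) `c : A × A → ℂˣ`. -/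
def IsAltBicharacter {A : Type*} [AddCommGroup A] (c : A → A → ℂˣ) : Prop :=
  (∀ a b x, c (a + b) x = c a x * c b x) ∧
    (∀ a b x, c a (b + x) = c a b * c a x) ∧
    ∀ a, c a a = 1

/-!
Fix a linear order on a basis `(b i)` of `A` and write `ℂˣ` additively. An alternating
bicharacter `c` equals `B - Bᵀ` for the bilinear map `B` with `B (b i) (b j) = c (b i) (b j)` for
`i < j` and `0` otherwise, and any bilinear map is a normalized cocycle, whose commutator map is
`B - Bᵀ`. If `f` and `g` have the same commutator map, `f / g` is a symmetric cocycle; it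
therefore defines an abelian extension of `A` by `ℂˣ`, which splits as `A` is projective, and a
splitting exhibits `f / g` as a coboundary. Conversely coboundaries are symmetric.
-/

theorem LinearMap.IsAlt.exists_eq_sub_flip {R M N : Type*} [CommRing R] [AddCommGroup M]
    [Module R M] [AddCommGroup N] [Module R N] [Module.Free R M]
    {Φ : M →ₗ[R] M →ₗ[R] N} (hΦ : Φ.IsAlt) : ∃ B : M →ₗ[R] M →ₗ[R] N, Φ = B - B.flip := by
  let b := Module.Free.chooseBasis R M
  let _ : LinearOrder (Module.Free.ChooseBasisIndex R M) :=
    WellOrderingRel.isWellOrder.linearOrder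
  refine ⟨b.constr R fun i => b.constr R fun j => if i < j then Φ (b i) (b j) else 0, ?_⟩
  refine LinearMap.ext_basis b b fun i j => ?_
  simp only [LinearMap.sub_apply, LinearMap.flip_apply, Module.Basis.constr_basis]
  rcases lt_trichotomy i j with h | rfl | h
  · simp [h, h.not_gt]
  · simp [hΦ.self_eq_zero]
  · simp [h, h.not_gt, hΦ.neg (b j) (b i)]

section

variable {A : Type*} [AddCommGroup A]

theorem LinearMap.isNormalizedCocycle_toMul (B : A →ₗ[ℤ] A →ₗ[ℤ] Additive ℂˣ) :
    IsNormalizedCocycle fun a b => (B a b).toMul :=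
  ⟨fun a => by simp, fun a b c => by simp [mul_assoc]⟩

namespace IsAltBicharacter

variable {c : A → A → ℂˣ}

def toLinearMap₂ (hc : IsAltBicharacter c) : A →ₗ[ℤ] A →ₗ[ℤ] Additive ℂˣ :=
  (AddMonoidHom.mk'
    (fun a => (AddMonoidHom.mk' (fun x => Additive.ofMul (c a x)) (hc.2.1 a)).toIntLinearMap)
    fun a a' => LinearMap.ext (hc.1 a a')).toIntLinearMap

@[simp]
theorem toLinearMap₂_apply (hc : IsAltBicharacter c) (a x : A) :
    hc.toLinearMap₂ a x = Additive.ofMul (c a x) :=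
  rfl

theorem isAlt_toLinearMap₂ (hc : IsAltBicharacter c) : hc.toLinearMap₂.IsAlt := hc.2.2

theorem exists_cocycle_commutator_eq [Module.Free ℤ A] (hc : IsAltBicharacter c) :
    ∃ f : A → A → ℂˣ, IsNormalizedCocycle f ∧ ∀ a b, c a b = f a b * (f b a)⁻¹ := by
  obtain ⟨B, hB⟩ := hc.isAlt_toLinearMap₂.exists_eq_sub_flip
  refine ⟨fun a b => (B a b).toMul, B.isNormalizedCocycle_toMul, fun a b => ?_⟩
  simpa [div_eq_mul_inv] using congrArg Additive.toMul (LinearMap.congr_fun₂ hB a b)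

end IsAltBicharacter

theorem IsNormalizedCocycle.mul_inv {f g : A → A → ℂˣ} (hf : IsNormalizedCocycle f)
    (hg : IsNormalizedCocycle g) : IsNormalizedCocycle fun a b => f a b * (g a b)⁻¹ := by
  refine ⟨fun a => by simp [hf.1 a, hg.1 a], fun a b c => ?_⟩
  rw [mul_mul_mul_comm, ← _root_.mul_inv, hf.2, hg.2, _root_.mul_inv, mul_mul_mul_comm]

theorem IsCoboundary.symm {q : A → A → ℂˣ} (hq : IsCoboundary q) (a b : A) : q a b = q b a := by
  obtain ⟨h, -, hh⟩ := hq
  rw [hh, hh, add_comm, mul_right_comm]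

/-- The central extension of `A` by `ℂˣ` defined by `q`, written additively. -/
@[ext]
structure CocycleExt (q : A → A → ℂˣ) where
  unit : ℂˣ
  base : A

namespace CocycleExt

variable {q : A → A → ℂˣ}

instance : Zero (CocycleExt q) := ⟨⟨1, 0⟩⟩

instance : Add (CocycleExt q) := ⟨fun x y => ⟨x.unit * y.unit * q x.base y.base, x.base + y.base⟩⟩

instance : Neg (CocycleExt q) := ⟨fun x => ⟨x.unit⁻¹ * (q x.base (-x.base))⁻¹, -x.base⟩⟩

@[simp] theorem zero_unit : (0 : CocycleExt q).unit = 1 := rfl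
@[simp] theorem zero_base : (0 : CocycleExt q).base = 0 := rfl
@[simp] theorem add_unit (x y : CocycleExt q) :
    (x + y).unit = x.unit * y.unit * q x.base y.base := rfl
@[simp] theorem add_base (x y : CocycleExt q) : (x + y).base = x.base + y.base := rfl
@[simp] theorem neg_unit (x : CocycleExt q) :
    (-x).unit = x.unit⁻¹ * (q x.base (-x.base))⁻¹ := rfl
@[simp] theorem neg_base (x : CocycleExt q) : (-x).base = -x.base := rfl

abbrev addCommGroup (hq : IsNormalizedCocycle q) (hs : ∀ a b, q a b = q b a) :
    AddCommGroup (CocycleExt q) where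
  add_assoc x y z := by
    refine CocycleExt.ext ?_ (add_assoc ..)
    calc x.unit * y.unit * q x.base y.base * z.unit * q (x.base + y.base) z.base
        = x.unit * y.unit * z.unit * (q x.base y.base * q (x.base + y.base) z.base) := by ac_rfl
      _ = x.unit * y.unit * z.unit * (q x.base (y.base + z.base) * q y.base z.base) := by
        rw [hq.2]
      _ = x.unit * (y.unit * z.unit * q y.base z.base) * q x.base (y.base + z.base) := by ac_rfl
  zero_add x := by ext <;> simp [(hq.1 _).1]
  add_zero x := by ext <;> simp [(hq.1 _).2]
  neg_add_cancel x := by ext <;> simp [hs x.base]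
  add_comm x y := by ext <;> simp [hs x.base, mul_comm x.unit, add_comm x.base]
  nsmul := nsmulRec
  zsmul := zsmulRec

end CocycleExt

theorem IsNormalizedCocycle.isCoboundary_of_symm [Module.Projective ℤ A] {q : A → A → ℂˣ}
    (hq : IsNormalizedCocycle q) (hs : ∀ a b, q a b = q b a) : IsCoboundary q := by
  let _ := CocycleExt.addCommGroup hq hs
  let π : CocycleExt q →ₗ[ℤ] A :=
    (AddMonoidHom.mk' CocycleExt.base fun _ _ => rfl).toIntLinearMap
  obtain ⟨s, hπs⟩ := Module.projective_lifting_property π LinearMap.id fun a => ⟨⟨1, a⟩, rfl⟩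
  have hbase (a : A) : (s a).base = a := LinearMap.congr_fun hπs a
  refine ⟨fun a => (s a).unit, by simp, fun a b => ?_⟩
  have hadd : (s (a + b)).unit = (s a).unit * (s b).unit * q a b := by
    simp [hbase]
  dsimp only
  rw [hadd, eq_mul_inv_iff_mul_eq, eq_mul_inv_iff_mul_eq]
  ac_rfl

end

theorem cocycle_commutator_iso_general (A : Type*) [AddCommGroup A]
    [Module.Free ℤ A] :
    (∀ c : A → A → ℂˣ, IsAltBicharacter c →
      ∃ f : A → A → ℂˣ, IsNormalizedCocycle f ∧ ∀ a b, c a b = f a b * (f b a)⁻¹) ∧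
    ∀ f g : A → A → ℂˣ, IsNormalizedCocycle f → IsNormalizedCocycle g →
      ((∀ a b, f a b * (f b a)⁻¹ = g a b * (g b a)⁻¹) ↔
        IsCoboundary (fun a b => f a b * (g a b)⁻¹)) := by
  refine ⟨fun c hc => hc.exists_cocycle_commutator_eq, fun f g hf hg => ?_⟩
  have hcomm_iff_symm : (∀ a b, f a b * (f b a)⁻¹ = g a b * (g b a)⁻¹) ↔
      ∀ a b, f a b * (g a b)⁻¹ = f b a * (g b a)⁻¹ := by
    simp only [← div_eq_mul_inv, div_eq_div_iff_div_eq_div]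
  rw [hcomm_iff_symm]
  exact ⟨(hf.mul_inv hg).isCoboundary_of_symm, IsCoboundary.symm⟩

/-- For a free abelian group `A` of finite rank, the commutator map
`f ↦ ((a,b) ↦ f(a,b)f(b,a)⁻¹)` induces an isomorphism `H²(A,ℂˣ) ≅ Alt²(A)`:
every alternating bicharacter arises from a normalized 2-cocycle, and two
2-cocycles have the same commutator map iff they differ by a coboundary. -/
theorem cocycle_commutator_iso (A : Type*) [AddCommGroup A]
    [Module.Free ℤ A] [Module.Finite ℤ A] :
    (∀ c : A → A → ℂˣ, IsAltBicharacter c →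
      ∃ f : A → A → ℂˣ, IsNormalizedCocycle f ∧ ∀ a b, c a b = f a b * (f b a)⁻¹) ∧
    ∀ f g : A → A → ℂˣ, IsNormalizedCocycle f → IsNormalizedCocycle g →
      ((∀ a b, f a b * (f b a)⁻¹ = g a b * (g b a)⁻¹) ↔
        IsCoboundary (fun a b => f a b * (g a b)⁻¹)) :=
  cocycle_commutator_iso_general A
end

section
/- With the setup of the Narain lattice: let II be an even unimodular lattice of signature (n,n) inside H = II ⊗ ℝ, p a projection as above with p̄ = 1−p, φ the self-adjoint isometric involution exchanging H_l = ker p̄ and H_r = ker p, and define t : II → H_l by t(α) = pα + φ(p̄α). If α ∈ ker(t), then for all β ∈ II, exp(πi((α,β)_lat + (α, φβ)_lat)) = 1, where (·,·)_lat is the lattice bilinear form (which takes integer values on II). -/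
/-! From `t α = 0` one gets `p α = -φ(p̄ α)` and `p̄ α = -φ(p α)`. Since `φ` exchanges `H_l` and
`H_r` and preserves `(·,·)_p`, it reverses the sign of `(·,·)_lat` on each of them, so splitting
`(α, φβ)_lat` along `H = H_l ⊕ H_r` gives `(α, φβ)_lat = (α, β)_lat`. The exponent is then
`2πi (α, β)_lat` with `(α, β)_lat ∈ ℤ`. -/

section ProjectionSplitting

variable {H : Type*} [AddCommGroup H] [Module ℝ H] (B : H →ₗ[ℝ] H →ₗ[ℝ] ℝ) {p : H →ₗ[ℝ] H}

lemma map_sub_self_apply_eq_zero (hp : ∀ x, p (p x) = p x) (x : H) : p (x - p x) = 0 := by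
  rw [map_sub, hp, sub_self]

lemma apply_eq_apply_proj_add_apply_sub_proj (hsymm : ∀ x y, B x y = B y x)
    (hp : ∀ x, p (p x) = p x) (horth : ∀ x y, p x = x → p y = 0 → B x y = 0) (u v : H) :
    B u v = B (p u) (p v) + B (u - p u) (v - p v) := by
  have hpu : B (p u) (v - p v) = 0 := horth _ _ (hp u) (map_sub_self_apply_eq_zero hp v)
  have hpv : B (u - p u) (p v) = 0 := by
    rw [hsymm]; exact horth _ _ (hp v) (map_sub_self_apply_eq_zero hp u)
  conv_lhs => rw [← add_sub_cancel (p u) u, ← add_sub_cancel (p v) v]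
  simp only [map_add, LinearMap.add_apply, hpu, hpv]
  ring

variable {φ : H →ₗ[ℝ] H}

lemma apply_map_map_of_proj_eq_zero
    (hφiso : ∀ v w, B (p (φ v)) (p (φ w)) - B (φ v - p (φ v)) (φ w - p (φ w))
      = B (p v) (p w) - B (v - p v) (w - p w))
    (hφrl : ∀ x, p x = 0 → p (φ x) = φ x) {v w : H}
    (hv : p v = 0) (hw : p w = 0) : B (φ v) (φ w) = -B v w := by
  have h := hφiso v w
  simp only [hφrl v hv, hφrl w hw, hv, hw, sub_self, map_zero, sub_zero,
    zero_sub] at h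
  linarith

lemma apply_map_map_of_proj_eq_self
    (hφiso : ∀ v w, B (p (φ v)) (p (φ w)) - B (φ v - p (φ v)) (φ w - p (φ w))
      = B (p v) (p w) - B (v - p v) (w - p w))
    (hφlr : ∀ x, p x = x → p (φ x) = 0) {v w : H}
    (hv : p v = v) (hw : p w = w) : B (φ v) (φ w) = -B v w := by
  have h := hφiso v w
  simp only [hφlr v hv, hφlr w hw, hv, hw, sub_self, map_zero, sub_zero,
    zero_sub] at h
  linarith

lemma apply_map_eq_apply_of_proj_add_map_sub_proj_eq_zero (hsymm : ∀ x y, B x y = B y x)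
    (hp : ∀ x, p (p x) = p x) (horth : ∀ x y, p x = x → p y = 0 → B x y = 0)
    (hφ2 : ∀ x, φ (φ x) = x) (hφrl : ∀ x, p x = 0 → p (φ x) = φ x)
    (hφlr : ∀ x, p x = x → p (φ x) = 0)
    (hφiso : ∀ v w, B (p (φ v)) (p (φ w)) - B (φ v - p (φ v)) (φ w - p (φ w))
      = B (p v) (p w) - B (v - p v) (w - p w))
    {a : H} (ha : p a + φ (a - p a) = 0) (c : H) :
    B a (φ c) = B a c := by
  have hker := map_sub_self_apply_eq_zero hp
  have hpa : p a = -φ (a - p a) := eq_neg_of_add_eq_zero_left ha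
  have hpa' : a - p a = -φ (p a) := by
    have h := congrArg φ ha
    rw [map_add, hφ2, map_zero, add_comm] at h
    exact eq_neg_of_add_eq_zero_left h
  have hφ_split : φ c = φ (p c) + φ (c - p c) := by rw [← map_add, add_sub_cancel]
  have hpφc : p (φ c) = φ (c - p c) := by
    rw [hφ_split, map_add, hφlr _ (hp c), hφrl _ (hker c), zero_add]
  have hφc : φ c - p (φ c) = φ (p c) := by
    rw [hpφc, ← map_sub, sub_sub_cancel]
  calc B a (φ c) = B (p a) (p (φ c)) + B (a - p a) (φ c - p (φ c)) :=
        apply_eq_apply_proj_add_apply_sub_proj B hsymm hp horth _ _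
    _ = B (-φ (a - p a)) (φ (c - p c)) + B (-φ (p a)) (φ (p c)) := by
        rw [← hpa, ← hpa', hφc, hpφc]
    _ = B (p a) (p c) + B (a - p a) (c - p c) := by
        rw [map_neg, map_neg, LinearMap.neg_apply, LinearMap.neg_apply,
          apply_map_map_of_proj_eq_zero B hφiso hφrl (hker a) (hker c),
          apply_map_map_of_proj_eq_self B hφiso hφlr (hp a) (hp c)]
        ring
    _ = B a c := (apply_eq_apply_proj_add_apply_sub_proj B hsymm hp horth _ _).symm

end ProjectionSplitting

lemma Complex.exp_pi_mul_I_mul_add_self_intCast (m : ℤ) :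
    Complex.exp (Real.pi * Complex.I * (((m : ℝ) + (m : ℝ) : ℝ) : ℂ)) = 1 := by
  rw [← Complex.exp_int_mul_two_pi_mul_I m]
  push_cast
  ring_nf

open Complex in
theorem narain_ker_t_exp_general (H : Type*) [AddCommGroup H] [Module ℝ H]
    (Blat : H →ₗ[ℝ] H →ₗ[ℝ] ℝ) (hsymm : ∀ x y, Blat x y = Blat y x)
    (p : H →ₗ[ℝ] H) (hp : ∀ x, p (p x) = p x)
    (horth : ∀ x y, p x = x → p y = 0 → Blat x y = 0)
    (φ : H →ₗ[ℝ] H) (hφ2 : ∀ x, φ (φ x) = x)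
    (hφrl : ∀ x, p x = 0 → p (φ x) = φ x)
    (hφlr : ∀ x, p x = x → p (φ x) = 0)
    (hφiso : ∀ v w, Blat (p (φ v)) (p (φ w)) - Blat (φ v - p (φ v)) (φ w - p (φ w))
        = Blat (p v) (p w) - Blat (v - p v) (w - p w))
    (L : Submodule ℤ H)
    (hint : ∀ x y : L, ∃ m : ℤ, Blat (x : H) (y : H) = (m : ℝ))
    (α : L) (hα : p (α : H) + φ ((α : H) - p (α : H)) = 0) :
    ∀ β : L,
      Complex.exp (Real.pi * Complex.I *
        (((Blat (α : H) (β : H) + Blat (α : H) (φ (β : H)) : ℝ)) : ℂ)) = 1 := by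
  intro β
  obtain ⟨m, hm⟩ := hint α β
  rw [apply_map_eq_apply_of_proj_add_map_sub_proj_eq_zero Blat hsymm hp horth hφ2 hφrl hφlr
    hφiso hα, hm]
  exact Complex.exp_pi_mul_I_mul_add_self_intCast m

open Complex in
/-- Narain lattice setup: `II` (realized as a `ℤ`-submodule `L` of `H = II ⊗ ℝ`)
is an even unimodular lattice of rank `2n` and signature `(n,n)` for the form
`Blat`; `p` is the projection with positive-definite `ker(1-p)` and
negative-definite `ker p`; `φ` is the self-adjoint (for `(·,·)_p`) isometric
involution exchanging `H_l = ker(1-p)` and `H_r = ker p`, with `(φv,v)_lat = 0`;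
and `t(α) = pα + φ(p̄α)`.  If `α ∈ ker t` then for all `β ∈ II`,
`exp(πi((α,β)_lat + (α,φβ)_lat)) = 1`. -/
theorem narain_ker_t_exp (n : ℕ) (H : Type*) [AddCommGroup H] [Module ℝ H]
    (Blat : H →ₗ[ℝ] H →ₗ[ℝ] ℝ) (hsymm : ∀ x y, Blat x y = Blat y x)
    (p : H →ₗ[ℝ] H) (hp : ∀ x, p (p x) = p x)
    (horth : ∀ x y, p x = x → p y = 0 → Blat x y = 0)
    (hpos : ∀ x, p x = x → x ≠ 0 → 0 < Blat x x)
    (hneg : ∀ x, p x = 0 → x ≠ 0 → Blat x x < 0)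
    (φ : H →ₗ[ℝ] H) (hφ2 : ∀ x, φ (φ x) = x)
    (hφrl : ∀ x, p x = 0 → p (φ x) = φ x)
    (hφlr : ∀ x, p x = x → p (φ x) = 0)
    (hφiso : ∀ v w, Blat (p (φ v)) (p (φ w)) - Blat (φ v - p (φ v)) (φ w - p (φ w))
        = Blat (p v) (p w) - Blat (v - p v) (w - p w))
    (hφself : ∀ v w, Blat (p (φ v)) (p w) - Blat (φ v - p (φ v)) (w - p w)
        = Blat (p v) (p (φ w)) - Blat (v - p v) (φ w - p (φ w)))
    (hφlat : ∀ v, Blat (φ v) v = 0)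
    (L : Submodule ℤ H)
    (b : Module.Basis (Fin (2 * n)) ℤ L)
    (hspan : Submodule.span ℝ (L : Set H) = ⊤)
    (hint : ∀ x y : L, ∃ m : ℤ, Blat (x : H) (y : H) = (m : ℝ))
    (heven : ∀ x : L, ∃ m : ℤ, Blat (x : H) (x : H) = 2 * (m : ℝ))
    (G : Matrix (Fin (2 * n)) (Fin (2 * n)) ℤ)
    (hG : ∀ i j, (G i j : ℝ) = Blat ((b i : L) : H) ((b j : L) : H))
    (hunimodular : G.det = 1 ∨ G.det = -1)
    (α : L) (hα : p (α : H) + φ ((α : H) - p (α : H)) = 0) :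
    ∀ β : L,
      Complex.exp (Real.pi * Complex.I *
        (((Blat (α : H) (β : H) + Blat (α : H) (φ (β : H)) : ℝ)) : ℂ)) = 1 :=
  narain_ker_t_exp_general H Blat hsymm p hp horth φ hφ2 hφrl hφlr hφiso L hint α hα
end

section
/- Let A ∈ T_r be a binary tree with r leaves labeled by {1,…,r}, r ≥ 2, and consider the coordinate functions on ℂ^r: z_A(z₁,…,z_r) = z_{r_A} (the coordinate of the rightmost leaf), x_A = z_{L(t_A)} − z_{R(t_A)} (difference at the top vertex), and ζ_e = z_{d(e)-\text{vertex difference}} / z_{u(e)-\text{vertex difference}} for each internal edge e, where z_v = z_{L(v)} − z_{R(v)} for internal vertices v. Then the combined map Ψ_A = (z_A, x_A, (ζ_e)_e) is a biholomorphism from the configuration space X_r(ℂ) = {(z₁,…,z_r) : z_i ≠ z_j for i ≠ j} onto its image in ℂ^r, and its inverse Ψ_A^{-1} is given by polynomials in z_A, x_A, and the ζ_e, hence extends to a holomorphic (polynomial) map ℂ² × ℂ^{E(A)} → ℂ^r. -/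
/-!
Each vertex difference `z_v = z_{L(v)} - z_{R(v)}` is `x_A` times the product of the `ζ_e` along
the path from the root to `v`, and every leaf coordinate is `z_A` plus a sum of such differences.
Hence `Ψ_A` has a polynomial left inverse on `X₅(ℂ)`, which gives injectivity, while `Ψ_A`
itself is analytic there because its denominators are differences of distinct points.
-/

open scoped Matrix

/-- The configuration space `X₅(ℂ)` of 5 distinct points. -/
def X5 : Set (Fin 5 → ℂ) := {z | ∀ i j, i ≠ j → z i ≠ z j}

/-- The tree coordinate map `Ψ_A` for `A = (23)((15)4)` (0-indexed:
`z₁,…,z₅ = z 0,…,z 4`):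
`Ψ_A(z) = (z_A, x_A, ζ_a, ζ_b, ζ_c) =
(z₄, z₃−z₄, (z₂−z₃)/(z₃−z₄), (z₁−z₅)/(z₅−z₄), (z₅−z₄)/(z₃−z₄))`. -/
noncomputable def PsiA : (Fin 5 → ℂ) → (Fin 5 → ℂ) := fun z =>
  ![z 3, z 2 - z 3, (z 1 - z 2) / (z 2 - z 3), (z 0 - z 4) / (z 4 - z 3),
    (z 4 - z 3) / (z 2 - z 3)]

/-- The polynomial inverse `Ψ_A⁻¹(z_A, x_A, ζ_a, ζ_b, ζ_c) =
(x_A ζ_c (1+ζ_b) + z_A, (1+ζ_a) x_A + z_A, x_A + z_A, z_A, ζ_c x_A + z_A)`. -/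
noncomputable def PsiAInv : (Fin 5 → ℂ) → (Fin 5 → ℂ) := fun w =>
  ![w 1 * w 4 * (1 + w 3) + w 0, (1 + w 2) * w 1 + w 0, w 1 + w 0, w 0,
    w 4 * w 1 + w 0]

section Analytic

variable {𝕜 E F : Type*} [NontriviallyNormedField 𝕜] [NormedAddCommGroup E] [NormedSpace 𝕜 E]
  [NormedAddCommGroup F] [NormedSpace 𝕜 F]

@[fun_prop]
theorem analyticAt_apply {ι : Type*} [Fintype ι] (i : ι) (z : ι → F) :
    AnalyticAt 𝕜 (fun x : ι → F => x i) z :=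
  (ContinuousLinearMap.proj (R := 𝕜) (φ := fun _ : ι => F) i).analyticAt z

@[fun_prop]
theorem AnalyticAt.vecCons {n : ℕ} {f : E → F} {g : E → Fin n → F} {x : E}
    (hf : AnalyticAt 𝕜 f x) (hg : AnalyticAt 𝕜 g x) :
    AnalyticAt 𝕜 (fun y => Matrix.vecCons (f y) (g y)) x := by
  refine AnalyticAt.pi fun i => Fin.cases ?_ (fun j => ?_) i
  · simpa using hf
  · simpa using analyticAt_pi_iff.mp hg j

end Analytic

theorem analyticAt_psiA {z : Fin 5 → ℂ} (h23 : z 2 ≠ z 3) (h43 : z 4 ≠ z 3) :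
    AnalyticAt ℂ PsiA z := by
  have := sub_ne_zero.2 h23
  have := sub_ne_zero.2 h43
  unfold PsiA
  fun_prop (disch := assumption)

theorem analyticAt_psiAInv (w : Fin 5 → ℂ) : AnalyticAt ℂ PsiAInv w := by
  unfold PsiAInv
  fun_prop

theorem psiAInv_psiA {z : Fin 5 → ℂ} (h23 : z 2 ≠ z 3) (h43 : z 4 ≠ z 3) :
    PsiAInv (PsiA z) = z := by
  have := sub_ne_zero.2 h23
  have := sub_ne_zero.2 h43
  ext i
  fin_cases i <;>
    simp only [PsiAInv, PsiA, Fin.isValue, Matrix.cons_val_one, Matrix.cons_val_zero,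
      Matrix.cons_val, Fin.zero_eta, Fin.mk_one, Fin.reduceFinMk] <;>
    field_simp <;> ring

/-- `Ψ_A` is a biholomorphism from `X₅(ℂ)` onto its image: it is injective on
`X₅(ℂ)`, holomorphic there, and its inverse is a polynomial map (hence entire)
which is a left inverse on `X₅(ℂ)`. -/
theorem psiA_biholomorphism :
    Set.InjOn PsiA X5 ∧
    AnalyticOnNhd ℂ PsiA X5 ∧
    (∀ w : Fin 5 → ℂ, AnalyticAt ℂ PsiAInv w) ∧
    ∀ z ∈ X5, PsiAInv (PsiA z) = z := by
  have hinv : Set.LeftInvOn PsiAInv PsiA X5 := fun z hz =>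
    psiAInv_psiA (hz 2 3 (by decide)) (hz 4 3 (by decide))
  exact ⟨hinv.injOn, fun z hz => analyticAt_psiA (hz 2 3 (by decide)) (hz 4 3 (by decide)),
    analyticAt_psiAInv, hinv⟩
end
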